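/- arXiv:1509.04415 — 10 statements merged into one kernel-verified Lean document; each statement's English description precedes it below -/
import Mathlib

section
/- For any positive real number ρ ≠ 1, there exist real numbers λ₁, λ₂, λ₃, each satisfying |λᵢ| > 1/2, such that for every real x, x³ − (3(ρ+1)/(2(ρ−1)))x² + (ρ+1)/(2(ρ−1)) = (x − λ₁)(x − λ₂)(x − λ₃). In other words, all roots of the polynomial p_ρ are real and lie outside the interval [−1/2, 1/2]. -/
/-!
With `c = (ρ + 1) / (ρ - 1)` the polynomial is `x³ - (3c/2) x² + c/2`, and `ρ > 0` gives `|c| > 1`.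
Since `x ↦ -p(-x)` turns the polynomial for `c` into the one for `-c`, we may take `c > 1`. Then the
polynomial takes the values `-1 - c < 0`, `(c - 1)/8 > 0`, `(c + 1)/8 > 0`, `1 - c < 0` at
`-1, -1/2, 1/2, 1`, so it has a root in `(-1, -1/2)` and one in `(1/2, 1)`; by Vieta the third root
is `3c/2` minus these two, which exceeds `1`.
-/

theorem cubic_eq_mul_of_two_roots {R : Type*} [CommRing R] [IsDomain R] {a b d r₁ r₂ : R}
    (hne : r₁ ≠ r₂) (h₁ : r₁ ^ 3 + a * r₁ ^ 2 + b * r₁ + d = 0)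
    (h₂ : r₂ ^ 3 + a * r₂ ^ 2 + b * r₂ + d = 0) (x : R) :
    x ^ 3 + a * x ^ 2 + b * x + d = (x - r₁) * (x - r₂) * (x - (-a - r₁ - r₂)) := by
  have hq : r₁ ^ 2 + r₁ * r₂ + r₂ ^ 2 + a * (r₁ + r₂) + b = 0 := by
    refine (mul_eq_zero.mp ?_).resolve_left (sub_ne_zero.mpr hne)
    linear_combination h₁ - h₂
  linear_combination (x - r₁) * hq + h₁

def SplitsOutsideHalf (p : ℝ → ℝ) : Prop :=
  ∃ l₁ l₂ l₃ : ℝ, 1/2 < |l₁| ∧ 1/2 < |l₂| ∧ 1/2 < |l₃| ∧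
    ∀ x : ℝ, p x = (x - l₁) * (x - l₂) * (x - l₃)

theorem SplitsOutsideHalf.neg_comp_neg {p : ℝ → ℝ} (hp : SplitsOutsideHalf p) :
    SplitsOutsideHalf fun x ↦ -p (-x) := by
  obtain ⟨l₁, l₂, l₃, h₁, h₂, h₃, hp⟩ := hp
  refine ⟨-l₁, -l₂, -l₃, by rwa [abs_neg], by rwa [abs_neg], by rwa [abs_neg], fun x ↦ ?_⟩
  show -p (-x) = _
  rw [hp]
  ring

theorem splitsOutsideHalf_of_one_lt {c : ℝ} (hc : 1 < c) :
    SplitsOutsideHalf fun x ↦ x ^ 3 - 3 * c / 2 * x ^ 2 + c / 2 := by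
  set p : ℝ → ℝ := fun x ↦ x ^ 3 - 3 * c / 2 * x ^ 2 + c / 2 with hp
  have hcont : Continuous p := by fun_prop
  obtain ⟨r₁, ⟨hr₁_gt, hr₁_lt⟩, hr₁⟩ : ∃ r ∈ Set.Ioo (-1 : ℝ) (-1/2), p r = 0 :=
    intermediate_value_Ioo (by norm_num) hcont.continuousOn
      ⟨by simp only [hp]; linarith, by simp only [hp]; linarith⟩
  obtain ⟨r₂, ⟨hr₂_gt, hr₂_lt⟩, hr₂⟩ : ∃ r ∈ Set.Ioo (1/2 : ℝ) 1, p r = 0 :=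
    intermediate_value_Ioo' (by norm_num) hcont.continuousOn
      ⟨by simp only [hp]; linarith, by simp only [hp]; linarith⟩
  have hfactor (x : ℝ) := cubic_eq_mul_of_two_roots (a := -(3 * c / 2)) (b := 0) (d := c / 2)
    (x := x) (by linarith : r₁ ≠ r₂) (by linear_combination hr₁) (by linear_combination hr₂)
  refine ⟨r₁, r₂, 3 * c / 2 - r₁ - r₂, ?_, ?_, ?_, fun x ↦ ?_⟩
  · rw [abs_of_neg (by linarith)]; linarith
  · rw [abs_of_pos (by linarith)]; linarith
  · rw [abs_of_pos (by linarith)]; linarith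
  · linear_combination hfactor x

theorem splitsOutsideHalf_of_one_lt_abs {c : ℝ} (hc : 1 < |c|) :
    SplitsOutsideHalf fun x ↦ x ^ 3 - 3 * c / 2 * x ^ 2 + c / 2 := by
  rcases lt_abs.mp hc with hc | hc
  · exact splitsOutsideHalf_of_one_lt hc
  · convert (splitsOutsideHalf_of_one_lt hc).neg_comp_neg using 2
    ring

theorem one_lt_abs_add_one_div_sub_one {ρ : ℝ} (hρ : 0 < ρ) (hρ1 : ρ ≠ 1) :
    1 < |(ρ + 1) / (ρ - 1)| := by
  rw [abs_div, one_lt_div (abs_pos.mpr (sub_ne_zero.mpr hρ1)), abs_of_pos (by linarith : 0 < ρ + 1)]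
  exact abs_lt.mpr ⟨by linarith, by linarith⟩

theorem roots_of_p_rho_real_outside (ρ : ℝ) (hρ : 0 < ρ) (hρ1 : ρ ≠ 1) :
    ∃ l₁ l₂ l₃ : ℝ, 1/2 < |l₁| ∧ 1/2 < |l₂| ∧ 1/2 < |l₃| ∧
      ∀ x : ℝ, x^3 - (3 * (ρ + 1) / (2 * (ρ - 1))) * x^2 + (ρ + 1) / (2 * (ρ - 1))
        = (x - l₁) * (x - l₂) * (x - l₃) := by
  obtain ⟨l₁, l₂, l₃, h₁, h₂, h₃, h⟩ :=
    splitsOutsideHalf_of_one_lt_abs (one_lt_abs_add_one_div_sub_one hρ hρ1)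
  refine ⟨l₁, l₂, l₃, h₁, h₂, h₃, fun x ↦ ?_⟩
  have hsplit : (ρ + 1) / (2 * (ρ - 1)) = (ρ + 1) / (ρ - 1) / 2 := by rw [div_div, mul_comm]
  rw [mul_div_assoc, hsplit, ← h x]
  ring
end

section
/- For every real number β with |β| > 1/2, there exist real numbers λ₁, λ₂, λ₃, each satisfying |λᵢ| > 1/2, such that for every real x, q_β(x) = (x − λ₁)(x − λ₂)(x − λ₃). In particular, q_β(x) ≠ 0 for every x in the interval [−1/2, 1/2]. -/
/-!
Viète's trigonometric solution: choosing `θ` with `cos 3θ = 1 - 1/(2β²)`, which is possible as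
`β² ≥ 1/4`, the roots of `q_β` are `β (1 + 2 cos (θ + 2πk/3))` for `k = 0, 1, 2`. They all lie
outside `[-1/2, 1/2]` because no root of `q_β` does.
-/

open Real

/-- If `|l| ≤ 1/2` were a root, then `|β| (1 - 3l²) = |l|³ ≤ (1 - 3l²)/2`, because
`t³ - (1 - 3t²)/2 = (t + 1)² (t - 1/2)`. -/
theorem half_lt_abs_of_cubic_root {β l : ℝ} (hβ : 1/2 < |β|) (hl : l^3 - 3*β*l^2 + β = 0) :
    1/2 < |l| := by
  by_contra! hle
  have hpos : 0 < 1 - 3 * |l|^2 := by nlinarith [abs_nonneg l]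
  have habs : |β| * (1 - 3 * |l|^2) = |l|^3 := by
    have h := congrArg abs (show β * (1 - 3 * l^2) = -l^3 by linarith)
    rwa [abs_mul, abs_neg, abs_pow, ← sq_abs l, abs_of_pos hpos] at h
  have hcube : |l|^3 ≤ 1/2 * (1 - 3 * |l|^2) := by
    nlinarith [mul_nonpos_of_nonneg_of_nonpos (sq_nonneg (|l| + 1)) (sub_nonpos.2 hle)]
  nlinarith [mul_pos (sub_pos.2 hβ) hpos]

theorem cube_sub_three_mul_sub_two_cos_three_mul (y θ : ℝ) :
    y^3 - 3*y - 2 * cos (3*θ) =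
      (y - 2 * cos θ) * (y - 2 * cos (θ + 2*π/3)) * (y - 2 * cos (θ - 2*π/3)) := by
  have hcos : cos (2*π/3) = -1/2 := by
    rw [show 2*π/3 = π - π/3 by ring, cos_pi_sub, cos_pi_div_three]; ring
  have hsin : sin (2*π/3) = √3/2 := by
    rw [show 2*π/3 = π - π/3 by ring, sin_pi_sub, sin_pi_div_three]
  rw [cos_three_mul, cos_add, cos_sub, hcos, hsin]
  linear_combination (3 * y - 6 * cos θ) * sin_sq_add_cos_sq θ +
    sin θ^2 * (y - 2 * cos θ) * sq_sqrt (show (0:ℝ) ≤ 3 by norm_num)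

/-- Substituting `x = β (1 + y)` turns `x³ - 3βx² + β` into `β³ (y³ - 3y - 2) + β`. -/
theorem cubic_eq_mul_of_cos_three_mul {β θ : ℝ} (h : 2 * β^2 * (1 - cos (3*θ)) = 1) (x : ℝ) :
    x^3 - 3*β*x^2 + β =
      (x - β * (1 + 2 * cos θ)) * (x - β * (1 + 2 * cos (θ + 2*π/3))) *
        (x - β * (1 + 2 * cos (θ - 2*π/3))) := by
  have hβ : β ≠ 0 := by rintro rfl; simp at h
  obtain ⟨y, rfl⟩ : ∃ y, x = β * (1 + y) := ⟨x/β - 1, by field_simp; ring⟩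
  linear_combination β^3 * cube_sub_three_mul_sub_two_cos_three_mul y θ - β * h

theorem exists_cos_three_mul_eq {β : ℝ} (hβ : 1/2 ≤ |β|) :
    ∃ θ, 2 * β^2 * (1 - cos (3*θ)) = 1 := by
  have hβ2 : 1/4 ≤ β^2 := by nlinarith [sq_abs β, abs_nonneg β]
  have hβ0 : β ≠ 0 := by rintro rfl; norm_num at hβ2
  have hpos : 0 < 1 / (2 * β^2) := by positivity
  have hle : 1 / (2 * β^2) ≤ 2 := by
    rw [div_le_iff₀ (by positivity)]
    linarith
  refine ⟨arccos (1 - 1 / (2 * β^2)) / 3, ?_⟩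
  rw [mul_div_cancel₀ _ three_ne_zero, cos_arccos (by linarith) (by linarith)]
  field_simp
  ring

theorem roots_of_q_beta_real_outside (β : ℝ) (hβ : 1/2 < |β|) :
    ∃ l₁ l₂ l₃ : ℝ, 1/2 < |l₁| ∧ 1/2 < |l₂| ∧ 1/2 < |l₃| ∧
      (∀ x : ℝ, x^3 - 3 * β * x^2 + β = (x - l₁) * (x - l₂) * (x - l₃)) ∧
      (∀ x ∈ Set.Icc (-(1/2) : ℝ) (1/2), x^3 - 3 * β * x^2 + β ≠ 0) := by
  obtain ⟨θ, hθ⟩ := exists_cos_three_mul_eq hβ.le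
  have hfact := cubic_eq_mul_of_cos_three_mul hθ
  refine ⟨_, _, _, half_lt_abs_of_cubic_root hβ (by rw [hfact]; ring),
    half_lt_abs_of_cubic_root hβ (by rw [hfact]; ring),
    half_lt_abs_of_cubic_root hβ (by rw [hfact]; ring), hfact, ?_⟩
  intro x hx hroot
  have := half_lt_abs_of_cubic_root hβ hroot
  linarith [abs_le.2 hx]
end

section
/- For every real number β with β > 1/2, the polynomial q_β has three distinct real roots located as follows: there exist real numbers λ₁, λ₂, λ₃ with λ₁ < −1/2, 1/2 < λ₂ < 2β, and λ₃ > 2β, such that q_β(λ₁) = q_β(λ₂) = q_β(λ₃) = 0. -/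
/-! The cubic changes sign on each of `[-1, -1/2]`, `[1/2, 2β]` and `[2β, 3β]`: its values at
`-1, -1/2, 1/2, 2β, 3β` are `-1 - 2β`, `(2β - 1)/8`, `(2β + 1)/8`, `β(1 - 4β²)` and `β`.
The intermediate value theorem gives a root in each interval. -/

open Set

theorem exists_root_Ioo_of_mul_neg {f : ℝ → ℝ} {a b : ℝ} (hf : ContinuousOn f (Icc a b))
    (hab : a ≤ b) (h : f a * f b < 0) : ∃ x ∈ Ioo a b, f x = 0 := by
  rcases mul_neg_iff.mp h with ⟨ha, hb⟩ | ⟨ha, hb⟩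
  · exact intermediate_value_Ioo' hab hf ⟨hb, ha⟩
  · exact intermediate_value_Ioo hab hf ⟨ha, hb⟩

noncomputable def q (β x : ℝ) : ℝ := x ^ 3 - 3 * β * x ^ 2 + β

theorem continuous_q (β : ℝ) : Continuous (q β) := by
  unfold q; fun_prop

section

variable {β : ℝ}

theorem q_neg_one_neg (hβ : -(1/2) < β) : q β (-1) < 0 := by
  unfold q; linarith

theorem q_neg_half_pos (hβ : 1/2 < β) : 0 < q β (-(1/2)) := by
  unfold q; linarith

theorem q_half_pos (hβ : -(1/2) < β) : 0 < q β (1/2) := by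
  unfold q; linarith

theorem q_two_mul_neg (hβ : 1/2 < β) : q β (2 * β) < 0 := by
  unfold q; nlinarith

theorem q_three_mul_pos (hβ : 0 < β) : 0 < q β (3 * β) := by
  unfold q; linarith

end

theorem q_beta_three_roots_pos (β : ℝ) (hβ : 1/2 < β) :
    ∃ l₁ l₂ l₃ : ℝ, l₁ < -(1/2) ∧ 1/2 < l₂ ∧ l₂ < 2*β ∧ 2*β < l₃ ∧
      l₁^3 - 3 * β * l₁^2 + β = 0 ∧
      l₂^3 - 3 * β * l₂^2 + β = 0 ∧
      l₃^3 - 3 * β * l₃^2 + β = 0 := by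
  have hq {a b : ℝ} : ContinuousOn (q β) (Icc a b) := (continuous_q β).continuousOn
  obtain ⟨l₁, ⟨-, h₁⟩, hq₁⟩ := exists_root_Ioo_of_mul_neg hq (by norm_num)
    (mul_neg_of_neg_of_pos (q_neg_one_neg (by linarith)) (q_neg_half_pos hβ))
  obtain ⟨l₂, ⟨h₂, h₂'⟩, hq₂⟩ := exists_root_Ioo_of_mul_neg hq (by linarith)
    (mul_neg_of_pos_of_neg (q_half_pos (by linarith)) (q_two_mul_neg hβ))
  obtain ⟨l₃, ⟨h₃, -⟩, hq₃⟩ := exists_root_Ioo_of_mul_neg hq (by linarith)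
    (mul_neg_of_neg_of_pos (q_two_mul_neg hβ) (q_three_mul_pos (by linarith)))
  exact ⟨l₁, l₂, l₃, h₁, h₂, h₂', h₃, hq₁, hq₂, hq₃⟩
end

section
/- With v and w as defined: for every s ∈ [a, b] the denominator satisfies v(s)^p + (1 − v(s))^p > 0 (so w is well defined on [a, b]); w(a) = a and w(b) = b; w is strictly increasing on [a, b]; and w maps [a, b] onto [a, b] (so w restricts to an increasing bijection of [a, b] onto itself). -/
/-!
Writing `t = (2s - a - b)/(b - a) ∈ [-1, 1]`, the polynomial transform is
`v = (1/2 - 1/p) t³ + t/p + 1/2`, a strictly increasing cubic mapping `[a, b]` onto `[0, 1]`.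
The sigmoid `x ↦ (b xᵖ + a (1 - x)ᵖ)/(xᵖ + (1 - x)ᵖ)` is strictly increasing on `[0, 1]`,
because for `x < y` there one has `x (1 - y) < y (1 - x)`, and it sends `0 ↦ a`, `1 ↦ b`.
So `w` is a continuous strictly increasing composite, and the intermediate value theorem
gives surjectivity.
-/

open Set

namespace Kress

noncomputable def sigmoid (a b : ℝ) (p : ℕ) (x : ℝ) : ℝ :=
  (b * x ^ p + a * (1 - x) ^ p) / (x ^ p + (1 - x) ^ p)

lemma strictMono_cubic {R : Type*} [Ring R] [LinearOrder R] [IsStrictOrderedRing R]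
    {c d : R} (hc : 0 ≤ c) (hd : 0 < d) (e : R) :
    StrictMono fun t : R => c * t ^ 3 + d * t + e := by
  have hcube : Monotone fun t : R => c * t ^ 3 :=
    (Odd.strictMono_pow (by decide : Odd 3)).monotone.const_mul hc
  exact (hcube.add_strictMono (strictMono_id.const_mul hd)).add_const e

lemma pow_add_one_sub_pow_pos {x : ℝ} (hx : x ∈ Icc 0 1) (p : ℕ) :
    0 < x ^ p + (1 - x) ^ p := by
  obtain ⟨hx0, hx1⟩ := hx
  rcases hx0.lt_or_eq with hpos | rfl
  · exact add_pos_of_pos_of_nonneg (pow_pos hpos p) (pow_nonneg (sub_nonneg.2 hx1) p)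
  · simp only [sub_zero, one_pow]
    positivity

lemma sigmoid_zero (a b : ℝ) {p : ℕ} (hp : p ≠ 0) : sigmoid a b p 0 = a := by
  simp [sigmoid, zero_pow hp]

lemma sigmoid_one (a b : ℝ) {p : ℕ} (hp : p ≠ 0) : sigmoid a b p 1 = b := by
  simp [sigmoid, zero_pow hp]

lemma continuousOn_sigmoid (a b : ℝ) (p : ℕ) : ContinuousOn (sigmoid a b p) (Icc 0 1) :=
  ContinuousOn.div (by fun_prop) (by fun_prop) fun x hx => (pow_add_one_sub_pow_pos hx p).ne'

lemma strictMonoOn_sigmoid {a b : ℝ} (hab : a < b) {p : ℕ} (hp : p ≠ 0) :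
    StrictMonoOn (sigmoid a b p) (Icc 0 1) := by
  intro x hx y hy hxy
  have hcross : x ^ p * (1 - y) ^ p < y ^ p * (1 - x) ^ p := by
    rw [← mul_pow, ← mul_pow]
    exact pow_lt_pow_left₀ (by nlinarith) (mul_nonneg hx.1 (by linarith [hy.2])) hp
  rw [sigmoid, sigmoid, div_lt_div_iff₀ (pow_add_one_sub_pow_pos hx p)
    (pow_add_one_sub_pow_pos hy p)]
  nlinarith [mul_pos (sub_pos.2 hab) (sub_pos.2 hcross)]

noncomputable def cubicTransform (a b : ℝ) (p : ℕ) (s : ℝ) : ℝ :=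
  (1/(p : ℝ) - 1/2) * ((a + b - 2*s)/(b - a))^3 + (1/(p : ℝ)) * ((2*s - a - b)/(b - a)) + 1/2

lemma continuous_cubicTransform (a b : ℝ) (p : ℕ) : Continuous (cubicTransform a b p) := by
  unfold cubicTransform; fun_prop

section cubicTransform

variable {a b : ℝ} (hab : a < b) {p : ℕ}
include hab

lemma cubicTransform_left : cubicTransform a b p a = 0 := by
  have : b - a ≠ 0 := (sub_pos.2 hab).ne'
  rw [cubicTransform]; field_simp; ring

lemma cubicTransform_right : cubicTransform a b p b = 1 := by
  have : b - a ≠ 0 := (sub_pos.2 hab).ne'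
  rw [cubicTransform]; field_simp; ring

lemma strictMono_cubicTransform (hp : 2 ≤ p) : StrictMono (cubicTransform a b p) := by
  have hpR : (2 : ℝ) ≤ p := by exact_mod_cast hp
  have hcubic := strictMono_cubic (c := 1/2 - 1/(p : ℝ)) (d := 1/(p : ℝ))
    (by rw [sub_nonneg]; gcongr) (by positivity) (1/2)
  have haffine : StrictMono fun s : ℝ => (2*s - a - b)/(b - a) := fun x y h => by
    have := sub_pos.2 hab
    dsimp only; gcongr
  have heq : cubicTransform a b p = fun s => (1/2 - 1/(p : ℝ)) * ((2*s - a - b)/(b - a)) ^ 3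
      + 1/(p : ℝ) * ((2*s - a - b)/(b - a)) + 1/2 := by
    funext s; rw [cubicTransform]; ring
  rw [heq]
  exact hcubic.comp haffine

lemma image_cubicTransform_Icc (hp : 2 ≤ p) : cubicTransform a b p '' Icc a b = Icc 0 1 := by
  rw [← cubicTransform_left hab, ← cubicTransform_right hab]
  exact (continuous_cubicTransform a b p).continuousOn.image_Icc_of_monotoneOn hab.le
    ((strictMono_cubicTransform hab hp).monotone.monotoneOn _)

end cubicTransform

end Kress

open Kress

theorem kress_w_properties (a b : ℝ) (hab : a < b) (p : ℕ) (hp : 2 ≤ p)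
    (v w : ℝ → ℝ)
    (hv : ∀ s : ℝ, v s = (1/(p : ℝ) - 1/2) * ((a + b - 2*s)/(b - a))^3
        + (1/(p : ℝ)) * ((2*s - a - b)/(b - a)) + 1/2)
    (hw : ∀ s : ℝ, w s = (b * (v s)^p + a * (1 - v s)^p) / ((v s)^p + (1 - v s)^p)) :
    (∀ s ∈ Set.Icc a b, 0 < (v s)^p + (1 - v s)^p) ∧
    w a = a ∧ w b = b ∧
    StrictMonoOn w (Set.Icc a b) ∧
    w '' Set.Icc a b = Set.Icc a b := by
  have hp0 : p ≠ 0 := by omega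
  have hv_eq : v = cubicTransform a b p := funext hv
  have hw_eq : w = sigmoid a b p ∘ v := funext hw
  have hv_image : v '' Icc a b = Icc 0 1 := hv_eq ▸ image_cubicTransform_Icc hab hp
  have hv_maps : MapsTo v (Icc a b) (Icc 0 1) := hv_image ▸ mapsTo_image v _
  have hw_mono : StrictMonoOn w (Icc a b) := hw_eq ▸ (strictMonoOn_sigmoid hab hp0).comp
    (hv_eq ▸ strictMono_cubicTransform hab hp |>.strictMonoOn _) hv_maps
  refine ⟨fun s hs => pow_add_one_sub_pow_pos (hv_maps hs) p, ?_, ?_, hw_mono, ?_⟩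
  · rw [hw_eq, Function.comp_apply, hv_eq, cubicTransform_left hab, sigmoid_zero a b hp0]
  · rw [hw_eq, Function.comp_apply, hv_eq, cubicTransform_right hab, sigmoid_one a b hp0]
  · rw [hw_eq, image_comp, hv_image, (continuousOn_sigmoid a b p).image_Icc_of_monotoneOn
      zero_le_one (strictMonoOn_sigmoid hab hp0).monotoneOn, sigmoid_zero a b hp0,
      sigmoid_one a b hp0]
end

section
/- With v and w as defined, the function w is infinitely differentiable in a neighborhood of a and in a neighborhood of b, and all its derivatives of order 1 through p − 1 vanish at both endpoints: for every integer k with 1 ≤ k ≤ p − 1, the k-th derivative of w satisfies w⁽ᵏ⁾(a) = 0 and w⁽ᵏ⁾(b) = 0. -/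
open Filter Topology

lemma ev_iteratedDeriv {f g : ℝ → ℝ} {a : ℝ} (k : ℕ) (h : f =ᶠ[𝓝 a] g) :
    iteratedDeriv k f =ᶠ[𝓝 a] iteratedDeriv k g := by
  induction k with
  | zero => simpa [iteratedDeriv_zero] using h
  | succ n ih => simpa [iteratedDeriv_succ] using ih.deriv

lemma vanish_aux (f g : ℝ → ℝ) (U : Set ℝ) (hU : IsOpen U) (a : ℝ)
    (haU : a ∈ U) (hf : ContDiff ℝ (⊤ : ℕ∞) f) (hg : ContDiffOn ℝ (⊤ : ℕ∞) g U)
    (p : ℕ) : ∀ k : ℕ, k ≤ p →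
    ∃ g' : ℝ → ℝ, ContDiffOn ℝ (⊤ : ℕ∞) g' U ∧
      iteratedDeriv k (fun s => f s ^ p * g s) =ᶠ[𝓝 a] fun s => f s ^ (p - k) * g' s := by
  intro k
  induction k with
  | zero => exact fun _ => ⟨g, hg, by simp⟩
  | succ n ih =>
    intro hnp
    obtain ⟨g', hg', heq⟩ := ih (by omega)
    have hdf : ContDiff ℝ (⊤ : ℕ∞) (deriv f) := by
      have h' : ContDiff ℝ (⊤ : ℕ∞) f := hf
      exact (contDiff_infty_iff_deriv.mp h').2
    refine ⟨fun s => (p - n : ℕ) * deriv f s * g' s + f s * deriv g' s, ?_, ?_⟩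
    · exact ((contDiff_const.mul hdf).contDiffOn.mul hg').add
        ((hf.contDiffOn.mono (Set.subset_univ U)).mul (hg'.deriv_of_isOpen hU (by simp)))
    · rw [iteratedDeriv_succ]
      refine heq.deriv.trans ?_
      filter_upwards [hU.mem_nhds haU] with s hs
      have hdg' : DifferentiableAt ℝ g' s :=
        (hg'.differentiableOn (by simp)).differentiableAt (hU.mem_nhds hs)
      have hdfs : DifferentiableAt ℝ f s := hf.differentiable (by simp) s
      have h1 : deriv (fun s => f s ^ (p - n) * g' s) s
          = ((p - n : ℕ) * f s ^ (p - n - 1) * deriv f s) * g' s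
            + f s ^ (p - n) * deriv g' s := by
        rw [deriv_fun_mul ((hdfs.fun_pow _)) hdg', deriv_fun_pow hdfs]
      obtain ⟨m, hm⟩ : ∃ m, p - n = m + 1 := ⟨p - n - 1, by omega⟩
      have hmm : p - (n + 1) = m := by omega
      rw [h1, hm, hmm, pow_succ, Nat.add_sub_cancel]
      ring

lemma iter_const_add (c : ℝ) (h : ℝ → ℝ) (k : ℕ) (hk : 1 ≤ k) :
    iteratedDeriv k (fun s => c + h s) = iteratedDeriv k h := by
  obtain ⟨n, rfl⟩ : ∃ n, k = n + 1 := ⟨k - 1, by omega⟩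
  have hd : deriv (fun s => c + h s) = deriv h := funext fun x => deriv_const_add c
  rw [iteratedDeriv_succ', hd, iteratedDeriv_succ']

theorem kress_w_derivatives_vanish (a b : ℝ) (hab : a < b) (p : ℕ) (hp : 2 ≤ p)
    (v w : ℝ → ℝ)
    (hv : ∀ s : ℝ, v s = (1/(p : ℝ) - 1/2) * ((a + b - 2*s)/(b - a))^3
        + (1/(p : ℝ)) * ((2*s - a - b)/(b - a)) + 1/2)
    (hw : ∀ s : ℝ, w s = (b * (v s)^p + a * (1 - v s)^p) / ((v s)^p + (1 - v s)^p)) :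
    ContDiffAt ℝ (⊤ : ℕ∞) w a ∧ ContDiffAt ℝ (⊤ : ℕ∞) w b ∧
    ∀ k : ℕ, 1 ≤ k → k ≤ p - 1 →
      iteratedDeriv k w a = 0 ∧ iteratedDeriv k w b = 0 := by
  have hba : b - a ≠ 0 := sub_ne_zero.mpr hab.ne'
  have hp0 : (p : ℝ) ≠ 0 := Nat.cast_ne_zero.mpr (by omega)
  have hpn0 : p ≠ 0 := by omega
  have hv' : v = fun s => (1/(p : ℝ) - 1/2) * ((a + b - 2*s) * (b - a)⁻¹)^3
      + (1/(p : ℝ)) * ((2*s - a - b) * (b - a)⁻¹) + 1/2 := by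
    funext s; rw [hv s]; ring
  have hvc : ContDiff ℝ (⊤ : ℕ∞) v := by rw [hv']; fun_prop
  have hva : v a = 0 := by rw [hv a]; field_simp; ring
  have hvb : v b = 1 := by rw [hv b]; field_simp; ring
  set D : ℝ → ℝ := fun s => (v s)^p + (1 - v s)^p with hDdef
  have hDc : ContDiff ℝ (⊤ : ℕ∞) D := by fun_prop
  have hDa : D a = 1 := by simp [hDdef, hva, zero_pow hpn0]
  have hDb : D b = 1 := by simp [hDdef, hvb, zero_pow hpn0]
  set U : Set ℝ := {s | D s ≠ 0} with hUdef
  have hU : IsOpen U := isOpen_ne_fun hDc.continuous continuous_const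
  have haU : a ∈ U := by simp [hUdef, hDa]
  have hbU : b ∈ U := by simp [hUdef, hDb]
  have hinv : ContDiffOn ℝ (⊤ : ℕ∞) (fun s => (D s)⁻¹) U :=
    hDc.contDiffOn.inv fun s hs => hs
  -- near a
  set g1 : ℝ → ℝ := fun s => (b - a) * (D s)⁻¹ with hg1def
  have hg1 : ContDiffOn ℝ (⊤ : ℕ∞) g1 U := contDiffOn_const.mul hinv
  have hwa : w =ᶠ[𝓝 a] fun s => a + (v s)^p * g1 s := by
    filter_upwards [hU.mem_nhds haU] with s hs
    have hs' : (v s)^p + (1 - v s)^p ≠ 0 := hs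
    rw [hw s, hg1def, hDdef]
    field_simp
    ring
  -- near b
  set g2 : ℝ → ℝ := fun s => (a - b) * (D s)⁻¹ with hg2def
  have hg2 : ContDiffOn ℝ (⊤ : ℕ∞) g2 U := contDiffOn_const.mul hinv
  have hwb : w =ᶠ[𝓝 b] fun s => b + (1 - v s)^p * g2 s := by
    filter_upwards [hU.mem_nhds hbU] with s hs
    have hs' : (v s)^p + (1 - v s)^p ≠ 0 := hs
    rw [hw s, hg2def, hDdef]
    field_simp
    ring
  have h1vc : ContDiff ℝ (⊤ : ℕ∞) (fun s => 1 - v s) := contDiff_const.sub hvc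
  refine ⟨?_, ?_, ?_⟩
  · refine ContDiffAt.congr_of_eventuallyEq ?_ hwa
    exact contDiffAt_const.add (((hvc.contDiffAt).pow p).mul
      (contDiffAt_const.mul ((hDc.contDiffAt).inv (by rw [hDa]; norm_num))))
  · refine ContDiffAt.congr_of_eventuallyEq ?_ hwb
    exact contDiffAt_const.add (((h1vc.contDiffAt).pow p).mul
      (contDiffAt_const.mul ((hDc.contDiffAt).inv (by rw [hDb]; norm_num))))
  · intro k hk1 hkp
    have hkp' : k ≤ p := by omega
    have hpk : p - k ≠ 0 := by omega
    constructor
    · obtain ⟨g', _, hev⟩ := vanish_aux v g1 U hU a haU hvc hg1 p k hkp'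
      calc iteratedDeriv k w a
          = iteratedDeriv k (fun s => a + (v s)^p * g1 s) a :=
            (ev_iteratedDeriv k hwa).self_of_nhds
        _ = iteratedDeriv k (fun s => (v s)^p * g1 s) a := by
            rw [iter_const_add a _ k hk1]
        _ = v a ^ (p - k) * g' a := hev.self_of_nhds
        _ = 0 := by rw [hva, zero_pow hpk, zero_mul]
    · obtain ⟨g', _, hev⟩ := vanish_aux (fun s => 1 - v s) g2 U hU b hbU h1vc hg2 p k hkp'
      calc iteratedDeriv k w b
          = iteratedDeriv k (fun s => b + (1 - v s)^p * g2 s) b :=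
            (ev_iteratedDeriv k hwb).self_of_nhds
        _ = iteratedDeriv k (fun s => (1 - v s)^p * g2 s) b := by
            rw [iter_const_add b _ k hk1]
        _ = (1 - v b) ^ (p - k) * g' b := hev.self_of_nhds
        _ = 0 := by rw [hvb, sub_self, zero_pow hpk, zero_mul]
end

section
/- Let ρ be a positive real number with ρ ≠ 1 and set β = (ρ+1)/(2(ρ−1)). Define the 2×2 matrices over A: CFK₀ = [[−2K, ((ρ+1)/ρ)·S], [−(1+ρ)·N, 2K']] and CFK₀ᵗ = [[2K, −((ρ+1)/ρ)·S], [(1+ρ)·N, −2K']]. Then CFK₀ᵗ · CFK₀ = ((ρ−1)²/ρ) · diag((K − β·1)(K + β·1), (K' − β·1)(K' + β·1)); in particular the off-diagonal entries of the product vanish. -/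
section Calderon

variable {A : Type*} [Ring A] [Algebra ℝ A]

theorem sub_smul_one_mul_add_smul_one (Z : A) (β : ℝ) :
    (Z - β • (1 : A)) * (Z + β • (1 : A)) = Z ^ 2 - β ^ 2 • (1 : A) := by
  simp only [sub_mul, mul_add, mul_smul_comm, smul_mul_assoc, mul_one, one_mul, sq]
  module

/-- With `t = (ρ + 1)² / ρ` one has `t - 4 = (ρ - 1)² / ρ` and `t / 4 = (t - 4) β²`. -/
theorem smul_mul_sub_four_smul_sq_eq_of_calderon {X Y Z : A} (hXY : X * Y = -(1/4 : ℝ) • (1 : A) + Z ^ 2)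
    {ρ : ℝ} (hρ : ρ ≠ 0) (hρ1 : ρ ≠ 1) {β : ℝ} (hβ : β = (ρ + 1) / (2 * (ρ - 1))) :
    ((ρ + 1) ^ 2 / ρ) • (X * Y) - (4 : ℝ) • Z ^ 2 =
      ((ρ - 1) ^ 2 / ρ) • ((Z - β • (1 : A)) * (Z + β • (1 : A))) := by
  have hρ1' : ρ - 1 ≠ 0 := sub_ne_zero.mpr hρ1
  rw [sub_smul_one_mul_add_smul_one, hXY, hβ]
  match_scalars <;> field_simp <;> ring

end Calderon

theorem CFK0t_mul_CFK0 (A : Type*) [Ring A] [Algebra ℝ A]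
    (S N K K' : A)
    (hSN : S * N = -(1/4 : ℝ) • (1 : A) + K ^ 2)
    (hNS : N * S = -(1/4 : ℝ) • (1 : A) + K' ^ 2)
    (hNK : N * K = K' * N)
    (hKS : K * S = S * K')
    (ρ : ℝ) (hρ : 0 < ρ) (hρ1 : ρ ≠ 1)
    (β : ℝ) (hβ : β = (ρ + 1) / (2 * (ρ - 1)))
    (CFK₀ CFK₀t : Matrix (Fin 2) (Fin 2) A)
    (hCFK₀ : CFK₀ = !![-(2 : ℝ) • K, ((ρ + 1)/ρ) • S; -(1 + ρ) • N, (2 : ℝ) • K'])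
    (hCFK₀t : CFK₀t = !![(2 : ℝ) • K, -((ρ + 1)/ρ) • S; (1 + ρ) • N, -(2 : ℝ) • K']) :
    CFK₀t * CFK₀ =
      ((ρ - 1)^2 / ρ) •
        !![(K - β • (1 : A)) * (K + β • (1 : A)), 0;
           0, (K' - β • (1 : A)) * (K' + β • (1 : A))] := by
  subst hCFK₀ hCFK₀t
  have hρ0 : ρ ≠ 0 := hρ.ne'
  rw [Matrix.mul_fin_two]
  ext i j
  fin_cases i <;> fin_cases j <;>
    simp only [Matrix.smul_apply, Matrix.of_apply, Matrix.cons_val', Matrix.cons_val_zero,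
      Matrix.cons_val_one, Matrix.empty_val', Matrix.cons_val_fin_one, smul_mul_smul_comm,
      smul_zero, Fin.zero_eta, Fin.mk_one]
  · rw [← smul_mul_sub_four_smul_sq_eq_of_calderon hSN hρ0 hρ1 hβ, pow_two K]
    module
  · rw [hKS]
    module
  · rw [hNK]
    module
  · rw [← smul_mul_sub_four_smul_sq_eq_of_calderon hNS hρ0 hρ1 hβ, pow_two K']
    module
end

section
/- Let ρ be a positive real number with ρ ≠ 1 and set β = (ρ+1)/(2(ρ−1)). Define the 2×2 matrices over A: L₀ = [[(1/2)·1 + K, −ρ⁻¹·S], [ρ·N, (1/2)·1 − K']], L₀ᵗ = [[(1/2)·1 − K, ρ⁻¹·S], [−ρ·N, (1/2)·1 + K']], CFK₀ = [[−2K, ((ρ+1)/ρ)·S], [−(1+ρ)·N, 2K']], CFK₀ᵗ = [[2K, −((ρ+1)/ρ)·S], [(1+ρ)·N, −2K']], R₀ = (1/(ρ+1))·[[1, 2S], [−2ρ·N, ρ·1]], and R₀ᵗ = (1/(ρ+1))·[[ρ·1, −2S], [2ρ·N, 1]]. Then L₀ᵗ·R₀·CFK₀ + CFK₀ᵗ·R₀ᵗ·L₀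 = −(2(ρ−1)/(ρ+1)) · diag((−1 + 2K²)·(β·1 + K), (−1 + 2K'²)·(β·1 + K')); in particular the off-diagonal entries of this sum vanish. -/
/-!
By the Calderón identities, `L₀ᵗ R₀` and `R₀ᵗ L₀` collapse to `1/(ρ+1)` times matrices whose
entries are polynomials in `K` (first column) and `K'` (second column), multiplied on the left by
`S` or `N` off the diagonal; e.g. `(ρ+1) (L₀ᵗ R₀)₁₁ = ½ - K - 2SN = (1 - 2K)(1 + K)`.
Multiplying by `CFK₀` and `CFK₀ᵗ = -CFK₀`, and moving `K`, `K'` to the right of `S`, `N` by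
`KS = SK'`, `K'N = NK`, the off-diagonal entries of the two products cancel, while each
diagonal entry of the sum factors as `(1 - 2K²)((ρ+1) + 2(ρ-1)K)`. Since `2(ρ-1)/(ρ+1) = 1/β`, this is the claimed diagonal.
-/

open Matrix

theorem mul_mul_eq_of_mul_eq {M : Type*} [Semigroup M] {a b c : M} (h : a * b = c) (x : M) :
    a * (b * x) = c * x := by
  rw [← mul_assoc, h]

section

variable {A : Type*} [Ring A] [Algebra ℝ A]

structure CalderonIdentities (S N K K' : A) : Prop where
  S_mul_N : S * N = -(1/4 : ℝ) • (1 : A) + K ^ 2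
  N_mul_S : N * S = -(1/4 : ℝ) • (1 : A) + K' ^ 2
  N_mul_K : N * K = K' * N
  K_mul_S : K * S = S * K'

namespace Transmission

variable (ρ : ℝ) (S N K K' : A)

noncomputable def L₀ : Matrix (Fin 2) (Fin 2) A :=
  !![(1/2 : ℝ) • (1 : A) + K, -(ρ⁻¹ • S); ρ • N, (1/2 : ℝ) • (1 : A) - K']

noncomputable def L₀t : Matrix (Fin 2) (Fin 2) A :=
  !![(1/2 : ℝ) • (1 : A) - K, ρ⁻¹ • S; -(ρ • N), (1/2 : ℝ) • (1 : A) + K']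

noncomputable def CFK₀ : Matrix (Fin 2) (Fin 2) A :=
  !![-(2 : ℝ) • K, ((ρ + 1)/ρ) • S; -(1 + ρ) • N, (2 : ℝ) • K']

noncomputable def CFK₀t : Matrix (Fin 2) (Fin 2) A :=
  !![(2 : ℝ) • K, -((ρ + 1)/ρ) • S; (1 + ρ) • N, -(2 : ℝ) • K']

noncomputable def R₀ : Matrix (Fin 2) (Fin 2) A :=
  (1/(ρ + 1)) • !![(1 : A), (2 : ℝ) • S; -(2*ρ) • N, ρ • (1 : A)]

noncomputable def R₀t : Matrix (Fin 2) (Fin 2) A :=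
  (1/(ρ + 1)) • !![ρ • (1 : A), -(2 : ℝ) • S; (2*ρ) • N, (1 : A)]

variable {ρ S N K K'}

theorem L₀t_mul_R₀ (h : CalderonIdentities S N K K') (hρ : ρ ≠ 0) :
    L₀t ρ S N K K' * R₀ ρ S N = (1/(ρ + 1)) •
      !![(1 - (2 : ℝ) • K) * (1 + K), (2 : ℝ) • (S * (1 - K'));
         -(2 * ρ) • (N * (1 + K)), ρ • ((1 + (2 : ℝ) • K') * (1 - K'))] := by
  rw [L₀t, R₀, Matrix.mul_smul, mul_fin_two]
  refine congrArg _ (congrArg _ (vec2_eq (vec2_eq ?_ ?_) (vec2_eq ?_ ?_))) <;>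
    simp only [mul_add, add_mul, mul_sub, sub_mul, neg_mul, mul_neg, smul_mul_assoc,
      mul_smul_comm, smul_smul, one_mul, mul_one, smul_add, smul_sub, smul_neg, neg_neg,
      mul_assoc, pow_two, h.S_mul_N, h.N_mul_S, h.N_mul_K, h.K_mul_S] <;>
    match_scalars <;> field_simp <;> ring

theorem R₀t_mul_L₀ (h : CalderonIdentities S N K K') (hρ : ρ ≠ 0) :
    R₀t ρ S N * L₀ ρ S N K K' = (1/(ρ + 1)) •
      !![ρ • ((1 + (2 : ℝ) • K) * (1 - K)), -(2 : ℝ) • (S * (1 - K'));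
         (2 * ρ) • (N * (1 + K)), (1 - (2 : ℝ) • K') * (1 + K')] := by
  rw [R₀t, L₀, Matrix.smul_mul, mul_fin_two]
  refine congrArg _ (congrArg _ (vec2_eq (vec2_eq ?_ ?_) (vec2_eq ?_ ?_))) <;>
    simp only [mul_add, add_mul, mul_sub, sub_mul, neg_mul, mul_neg, smul_mul_assoc,
      mul_smul_comm, smul_smul, one_mul, mul_one, smul_add, smul_sub, neg_neg,
      mul_assoc, pow_two, h.S_mul_N, h.N_mul_S, h.N_mul_K] <;>
    match_scalars <;> field_simp <;> ring

theorem mul_CFK₀_add_CFK₀t_mul (h : CalderonIdentities S N K K') (hρ : ρ ≠ 0) :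
    !![(1 - (2 : ℝ) • K) * (1 + K), (2 : ℝ) • (S * (1 - K'));
       -(2 * ρ) • (N * (1 + K)), ρ • ((1 + (2 : ℝ) • K') * (1 - K'))] * CFK₀ ρ S N K K' +
    CFK₀t ρ S N K K' * !![ρ • ((1 + (2 : ℝ) • K) * (1 - K)), -(2 : ℝ) • (S * (1 - K'));
       (2 * ρ) • (N * (1 + K)), (1 - (2 : ℝ) • K') * (1 + K')] =
    !![(1 - (2 : ℝ) • K ^ 2) * ((ρ + 1) • 1 + (2 * (ρ - 1)) • K), 0;
       0, (1 - (2 : ℝ) • K' ^ 2) * ((ρ + 1) • 1 + (2 * (ρ - 1)) • K')] := by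
  rw [CFK₀, CFK₀t, mul_fin_two, mul_fin_two]
  simp only [Matrix.of_add_of, vec2_add]
  refine congrArg _ (vec2_eq (vec2_eq ?_ ?_) (vec2_eq ?_ ?_)) <;>
    simp only [mul_add, add_mul, mul_sub, sub_mul, neg_mul, mul_neg, smul_mul_assoc,
      mul_smul_comm, smul_smul, one_mul, mul_one, smul_add, smul_sub, smul_neg, neg_smul,
      mul_assoc, pow_two, h.S_mul_N, h.N_mul_S, h.N_mul_K, h.K_mul_S,
      mul_mul_eq_of_mul_eq h.N_mul_S, mul_mul_eq_of_mul_eq h.N_mul_K,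
      mul_mul_eq_of_mul_eq h.K_mul_S] <;>
    match_scalars <;> field_simp <;> ring

end Transmission

theorem one_div_smul_diagonal_entry {ρ β : ℝ} (hβ : β = (ρ + 1) / (2 * (ρ - 1)))
    (hρ1 : ρ ≠ 1) (hρ : ρ + 1 ≠ 0) (X : A) :
    (1 / (ρ + 1)) • ((1 - (2 : ℝ) • X ^ 2) * ((ρ + 1) • 1 + (2 * (ρ - 1)) • X)) =
      (-(2 * (ρ - 1) / (ρ + 1))) • ((-1 + (2 : ℝ) • X ^ 2) * (β • 1 + X)) := by
  have : ρ - 1 ≠ 0 := sub_ne_zero.mpr hρ1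
  subst hβ
  simp only [mul_add, add_mul, mul_sub, sub_mul, neg_mul, smul_mul_assoc,
      mul_smul_comm, smul_smul, one_mul, mul_one, smul_add, smul_sub, smul_neg]
  match_scalars <;> field_simp

end

theorem cross_terms_identity (A : Type*) [Ring A] [Algebra ℝ A]
    (S N K K' : A)
    (hSN : S * N = -(1/4 : ℝ) • (1 : A) + K ^ 2)
    (hNS : N * S = -(1/4 : ℝ) • (1 : A) + K' ^ 2)
    (hNK : N * K = K' * N)
    (hKS : K * S = S * K')
    (ρ : ℝ) (hρ : 0 < ρ) (hρ1 : ρ ≠ 1)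
    (β : ℝ) (hβ : β = (ρ + 1) / (2 * (ρ - 1)))
    (L₀ L₀t CFK₀ CFK₀t R₀ R₀t : Matrix (Fin 2) (Fin 2) A)
    (hL₀ : L₀ = !![(1/2 : ℝ) • (1 : A) + K, -(ρ⁻¹ • S); ρ • N, (1/2 : ℝ) • (1 : A) - K'])
    (hL₀t : L₀t = !![(1/2 : ℝ) • (1 : A) - K, ρ⁻¹ • S; -(ρ • N), (1/2 : ℝ) • (1 : A) + K'])
    (hCFK₀ : CFK₀ = !![-(2 : ℝ) • K, ((ρ + 1)/ρ) • S; -(1 + ρ) • N, (2 : ℝ) • K'])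
    (hCFK₀t : CFK₀t = !![(2 : ℝ) • K, -((ρ + 1)/ρ) • S; (1 + ρ) • N, -(2 : ℝ) • K'])
    (hR₀ : R₀ = (1/(ρ + 1)) • !![(1 : A), (2 : ℝ) • S; -(2*ρ) • N, ρ • (1 : A)])
    (hR₀t : R₀t = (1/(ρ + 1)) • !![ρ • (1 : A), -(2 : ℝ) • S; (2*ρ) • N, (1 : A)]) :
    L₀t * R₀ * CFK₀ + CFK₀t * R₀t * L₀ =
      (-(2*(ρ - 1)/(ρ + 1))) •
        !![(-(1 : A) + (2 : ℝ) • K ^ 2) * (β • (1 : A) + K), 0;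
           0, (-(1 : A) + (2 : ℝ) • K' ^ 2) * (β • (1 : A) + K')] := by
  have h : CalderonIdentities S N K K' := ⟨hSN, hNS, hNK, hKS⟩
  change L₀ = Transmission.L₀ ρ S N K K' at hL₀
  change L₀t = Transmission.L₀t ρ S N K K' at hL₀t
  change CFK₀ = Transmission.CFK₀ ρ S N K K' at hCFK₀
  change CFK₀t = Transmission.CFK₀t ρ S N K K' at hCFK₀t
  change R₀ = Transmission.R₀ ρ S N at hR₀
  change R₀t = Transmission.R₀t ρ S N at hR₀t
  subst hL₀ hL₀t hCFK₀ hCFK₀t hR₀ hR₀t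
  rw [Matrix.mul_assoc (Transmission.CFK₀t ρ S N K K'), Transmission.L₀t_mul_R₀ h hρ.ne',
    Transmission.R₀t_mul_L₀ h hρ.ne', Matrix.smul_mul, Matrix.mul_smul, ← smul_add,
    Transmission.mul_CFK₀_add_CFK₀t_mul h hρ.ne']
  simp only [Matrix.smul_of, smul_vec2, smul_zero,
    one_div_smul_diagonal_entry hβ hρ1 (by positivity : ρ + 1 ≠ 0)]
end

section
/- Let ρ be a positive real number with ρ ≠ 1 and set β = (ρ+1)/(2(ρ−1)). Define the 2×2 matrices over A: L₀ = [[(1/2)·1 + K, −ρ⁻¹·S], [ρ·N, (1/2)·1 − K']], L₀ᵗ = [[(1/2)·1 − K, ρ⁻¹·S], [−ρ·N, (1/2)·1 + K']], CFK₀ = [[−2K, ((ρ+1)/ρ)·S], [−(1+ρ)·N, 2K']], CFK₀ᵗ = [[2K, −((ρ+1)/ρ)·S], [(1+ρ)·N, −2K']], R₀ = (1/(ρ+1))·[[1, 2S], [−2ρ·N, ρ·1]], R₀ᵗ = (1/(ρ+1))·[[ρ·1, −2S], [2ρ·N, 1]], GFK₀ = L₀ + R₀·CFK₀ and GFK₀ᵗ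 = L₀ᵗ + CFK₀ᵗ·R₀ᵗ. Then GFK₀ᵗ · GFK₀ = diag(A₁, A₁'), where A₁ = (4(ρ−1)²/(ρ+1)²)·(K + β·1)·(K³ − 3β·K² + β·1) and A₁' = (4(ρ−1)²/(ρ+1)²)·(K' + β·1)·(K'³ − 3β·K'² + β·1). -/
/-!
Up to the factor `(ρ + 1)⁻¹`, `GFK₀` is the block matrix `[[P(K), 4SK'], [4ρK'N, P(K')]]` with
`P(x) = (ρ + 1) + (ρ - 1)x - 2(ρ + 1)x²`, and `GFK₀ᵗ` is the same matrix with the off-diagonal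
blocks negated. The intertwining relations `KS = SK'` and `NK = K'N` make the off-diagonal blocks
of the product vanish. The Calderón identities give `(SK')(K'N) = K⁴ - K²/4` and
`(K'N)(SK') = K'⁴ - K'²/4`, so the diagonal blocks are `P(x)² - 16ρ(x⁴ - x²/4)` at `x = K, K'`,
a polynomial in a single element which factors as claimed because `2(ρ - 1)β = ρ + 1`.
-/

theorem Matrix.neg_offDiag_mul_self_fin_two {R : Type*} [Ring R] {a b c d : R}
    (hb : SemiconjBy b d a) (hc : SemiconjBy c a d) :
    !![a, -b; -c, d] * !![a, b; c, d] = !![a * a - b * c, 0; 0, d * d - c * b] := by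
  rw [Matrix.mul_fin_two]
  simp only [neg_mul, hb.eq, hc.eq]
  simp [sub_eq_add_neg, add_comm]

namespace Calderon

variable {𝕜 A : Type*} [Field 𝕜] [Ring A] [Algebra 𝕜 A]

def L₀ (ρ : 𝕜) (S N K K' : A) : Matrix (Fin 2) (Fin 2) A :=
  !![(1/2 : 𝕜) • (1 : A) + K, -(ρ⁻¹ • S); ρ • N, (1/2 : 𝕜) • (1 : A) - K']

def L₀t (ρ : 𝕜) (S N K K' : A) : Matrix (Fin 2) (Fin 2) A :=
  !![(1/2 : 𝕜) • (1 : A) - K, ρ⁻¹ • S; -(ρ • N), (1/2 : 𝕜) • (1 : A) + K']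

def CFK₀ (ρ : 𝕜) (S N K K' : A) : Matrix (Fin 2) (Fin 2) A :=
  !![-(2 : 𝕜) • K, ((ρ + 1)/ρ) • S; -(1 + ρ) • N, (2 : 𝕜) • K']

def CFK₀t (ρ : 𝕜) (S N K K' : A) : Matrix (Fin 2) (Fin 2) A :=
  !![(2 : 𝕜) • K, -((ρ + 1)/ρ) • S; (1 + ρ) • N, -(2 : 𝕜) • K']

def R₀ (ρ : 𝕜) (S N : A) : Matrix (Fin 2) (Fin 2) A :=
  (1/(ρ + 1)) • !![(1 : A), (2 : 𝕜) • S; -(2*ρ) • N, ρ • (1 : A)]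

def R₀t (ρ : 𝕜) (S N : A) : Matrix (Fin 2) (Fin 2) A :=
  (1/(ρ + 1)) • !![ρ • (1 : A), -(2 : 𝕜) • S; (2*ρ) • N, (1 : A)]

def GFK₀ (ρ : 𝕜) (S N K K' : A) : Matrix (Fin 2) (Fin 2) A :=
  L₀ ρ S N K K' + R₀ ρ S N * CFK₀ ρ S N K K'

def GFK₀t (ρ : 𝕜) (S N K K' : A) : Matrix (Fin 2) (Fin 2) A :=
  L₀t ρ S N K K' + CFK₀t ρ S N K K' * R₀t ρ S N

def gfkDiag (ρ : 𝕜) (x : A) : A := (ρ + 1) • 1 + (ρ - 1) • x - (2 * (ρ + 1)) • x ^ 2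

theorem semiconjBy_gfkDiag (ρ : 𝕜) {s x y : A} (h : SemiconjBy s x y) :
    SemiconjBy s (gfkDiag ρ x) (gfkDiag ρ y) :=
  (((SemiconjBy.one_right s).smul_right _).add_right (h.smul_right _)).sub_right
    ((h.pow_right 2).smul_right _)

theorem gfkDiag_mul_self_sub [CharZero 𝕜] {ρ β : 𝕜} (hβ : 2 * (ρ - 1) * β = ρ + 1) (x : A) :
    gfkDiag ρ x * gfkDiag ρ x - (16 * ρ) • (x ^ 4 - (1/4 : 𝕜) • x ^ 2) =
      (4 * (ρ - 1) ^ 2) • ((x + β • 1) * (x ^ 3 - (3 * β) • x ^ 2 + β • 1)) := by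
  have hsq : x * x = x ^ 2 := (sq x).symm
  simp only [gfkDiag, mul_add, add_mul, mul_sub, sub_mul, smul_mul_assoc, mul_smul_comm, smul_smul,
    mul_one, one_mul, smul_add, smul_sub, hsq, ← pow_succ, ← pow_succ', ← pow_add]
  match_scalars <;> grind

variable {S N K K' : A}

theorem calderon_SK'_mul_K'N (hSN : S * N = -(1/4 : 𝕜) • (1 : A) + K ^ 2)
    (hNS : N * S = -(1/4 : 𝕜) • (1 : A) + K' ^ 2) :
    S * K' * (K' * N) = K ^ 4 - (1/4 : 𝕜) • K ^ 2 := by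
  have hK' : K' * K' = N * S + (1/4 : 𝕜) • 1 := by rw [hNS, ← sq]; module
  calc S * K' * (K' * N) = S * N * (S * N) + (1/4 : 𝕜) • (S * N) := by
        rw [mul_assoc, ← mul_assoc K', hK']
        simp only [add_mul, mul_add, mul_assoc, smul_mul_assoc, mul_smul_comm, one_mul]
    _ = K ^ 4 - (1/4 : 𝕜) • K ^ 2 := by
        rw [hSN]
        simp only [add_mul, mul_add, smul_mul_assoc, mul_smul_comm, smul_add, one_mul, mul_one,
          ← pow_add]
        module

theorem calderon_K'N_mul_SK' (hNS : N * S = -(1/4 : 𝕜) • (1 : A) + K' ^ 2) :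
    K' * N * (S * K') = K' ^ 4 - (1/4 : 𝕜) • K' ^ 2 := by
  rw [mul_assoc, ← mul_assoc N, hNS]
  simp only [add_mul, mul_add, smul_mul_assoc, mul_smul_comm, one_mul, ← sq, ← pow_succ,
    ← pow_succ']
  module

theorem GFK₀_eq_smul [CharZero 𝕜] (hSN : S * N = -(1/4 : 𝕜) • (1 : A) + K ^ 2)
    (hNS : N * S = -(1/4 : 𝕜) • (1 : A) + K' ^ 2) (hNK : N * K = K' * N) {ρ : 𝕜} (hρ : ρ ≠ 0)
    (hρ1 : ρ + 1 ≠ 0) :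
    GFK₀ ρ S N K K' =
      (ρ + 1)⁻¹ • !![gfkDiag ρ K, (4 : 𝕜) • (S * K'); (4 * ρ) • (K' * N), gfkDiag ρ K'] := by
  rw [GFK₀, L₀, R₀, CFK₀, Matrix.smul_mul, Matrix.mul_fin_two]
  ext i j
  fin_cases i <;> fin_cases j <;>
    simp only [gfkDiag, hSN, hNK, hNS, one_div, neg_smul, smul_neg, neg_mul, mul_neg, neg_neg,
      neg_add_rev, smul_mul_assoc, mul_smul_comm, smul_smul, smul_add, smul_sub, add_mul, mul_add,
      one_mul, mul_one, Matrix.smul_of, Matrix.smul_cons, Matrix.smul_empty, Matrix.add_apply,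
      Matrix.smul_apply, Matrix.of_apply, Matrix.cons_val', Matrix.cons_val_zero,
      Matrix.cons_val_one, Matrix.cons_val_fin_one, Fin.zero_eta, Fin.mk_one, Fin.isValue] <;>
    match_scalars <;> field_simp <;> ring

theorem GFK₀t_eq_smul [CharZero 𝕜] (hSN : S * N = -(1/4 : 𝕜) • (1 : A) + K ^ 2)
    (hNS : N * S = -(1/4 : 𝕜) • (1 : A) + K' ^ 2) (hKS : K * S = S * K') {ρ : 𝕜} (hρ : ρ ≠ 0)
    (hρ1 : ρ + 1 ≠ 0) :
    GFK₀t ρ S N K K' =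
      (ρ + 1)⁻¹ • !![gfkDiag ρ K, -((4 : 𝕜) • (S * K')); -((4 * ρ) • (K' * N)), gfkDiag ρ K'] := by
  rw [GFK₀t, L₀t, R₀t, CFK₀t, Matrix.mul_smul, Matrix.mul_fin_two]
  ext i j
  fin_cases i <;> fin_cases j <;>
    simp only [gfkDiag, hSN, hKS, hNS, one_div, neg_smul, smul_neg, neg_mul, mul_neg, neg_neg,
      neg_add_rev, smul_mul_assoc, mul_smul_comm, smul_smul, smul_add, smul_sub, add_mul, mul_add,
      one_mul, mul_one, Matrix.smul_of, Matrix.smul_cons, Matrix.smul_empty, Matrix.add_apply,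
      Matrix.smul_apply, Matrix.of_apply, Matrix.cons_val', Matrix.cons_val_zero,
      Matrix.cons_val_one, Matrix.cons_val_fin_one, Fin.zero_eta, Fin.mk_one, Fin.isValue] <;>
    match_scalars <;> field_simp <;> ring

theorem GFK₀t_mul_GFK₀ [CharZero 𝕜] (hSN : S * N = -(1/4 : 𝕜) • (1 : A) + K ^ 2)
    (hNS : N * S = -(1/4 : 𝕜) • (1 : A) + K' ^ 2) (hNK : N * K = K' * N) (hKS : K * S = S * K')
    {ρ β : 𝕜} (hρ : ρ ≠ 0) (hρ1 : ρ + 1 ≠ 0) (hβ : 2 * (ρ - 1) * β = ρ + 1) :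
    GFK₀t ρ S N K K' * GFK₀ ρ S N K K' =
      !![(4 * (ρ - 1) ^ 2 / (ρ + 1) ^ 2) • ((K + β • 1) * (K ^ 3 - (3 * β) • K ^ 2 + β • 1)), 0;
         0, (4 * (ρ - 1) ^ 2 / (ρ + 1) ^ 2) •
           ((K' + β • 1) * (K' ^ 3 - (3 * β) • K' ^ 2 + β • 1))] := by
  have hSK' : SemiconjBy ((4 : 𝕜) • (S * K')) (gfkDiag ρ K') (gfkDiag ρ K) :=
    semiconjBy_gfkDiag ρ
      ((SemiconjBy.mul_left (show SemiconjBy S K' K from hKS.symm) (Commute.refl K')).smul_left _)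
  have hK'N : SemiconjBy ((4 * ρ) • (K' * N)) (gfkDiag ρ K) (gfkDiag ρ K') :=
    semiconjBy_gfkDiag ρ ((SemiconjBy.mul_left (Commute.refl K') hNK).smul_left _)
  have h16 : (4 : 𝕜) * (4 * ρ) = 16 * ρ := by ring
  have hK : gfkDiag ρ K * gfkDiag ρ K - (4 : 𝕜) • (S * K') * ((4 * ρ) • (K' * N)) =
      (4 * (ρ - 1) ^ 2) • ((K + β • 1) * (K ^ 3 - (3 * β) • K ^ 2 + β • 1)) := by
    rw [smul_mul_smul_comm, calderon_SK'_mul_K'N hSN hNS, h16, gfkDiag_mul_self_sub hβ]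
  have hK' : gfkDiag ρ K' * gfkDiag ρ K' - (4 * ρ) • (K' * N) * ((4 : 𝕜) • (S * K')) =
      (4 * (ρ - 1) ^ 2) • ((K' + β • 1) * (K' ^ 3 - (3 * β) • K' ^ 2 + β • 1)) := by
    rw [smul_mul_smul_comm, calderon_K'N_mul_SK' hNS, mul_comm, h16, gfkDiag_mul_self_sub hβ]
  rw [GFK₀t_eq_smul hSN hNS hKS hρ hρ1, GFK₀_eq_smul hSN hNS hNK hρ hρ1, Matrix.smul_mul,
    Matrix.mul_smul, smul_smul, Matrix.neg_offDiag_mul_self_fin_two hSK' hK'N, hK, hK']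
  have hscalar : (ρ + 1)⁻¹ * (ρ + 1)⁻¹ * (4 * (ρ - 1) ^ 2) = 4 * (ρ - 1) ^ 2 / (ρ + 1) ^ 2 := by
    rw [div_eq_mul_inv, ← inv_pow]
    ring
  simp only [Matrix.smul_of, Matrix.smul_cons, Matrix.smul_empty, smul_zero, smul_smul, hscalar]

end Calderon

theorem GFK0t_mul_GFK0 (A : Type*) [Ring A] [Algebra ℝ A]
    (S N K K' : A)
    (hSN : S * N = -(1/4 : ℝ) • (1 : A) + K ^ 2)
    (hNS : N * S = -(1/4 : ℝ) • (1 : A) + K' ^ 2)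
    (hNK : N * K = K' * N)
    (hKS : K * S = S * K')
    (ρ : ℝ) (hρ : 0 < ρ) (hρ1 : ρ ≠ 1)
    (β : ℝ) (hβ : β = (ρ + 1) / (2 * (ρ - 1)))
    (L₀ L₀t CFK₀ CFK₀t R₀ R₀t GFK₀ GFK₀t : Matrix (Fin 2) (Fin 2) A)
    (hL₀ : L₀ = !![(1/2 : ℝ) • (1 : A) + K, -(ρ⁻¹ • S); ρ • N, (1/2 : ℝ) • (1 : A) - K'])
    (hL₀t : L₀t = !![(1/2 : ℝ) • (1 : A) - K, ρ⁻¹ • S; -(ρ • N), (1/2 : ℝ) • (1 : A) + K'])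
    (hCFK₀ : CFK₀ = !![-(2 : ℝ) • K, ((ρ + 1)/ρ) • S; -(1 + ρ) • N, (2 : ℝ) • K'])
    (hCFK₀t : CFK₀t = !![(2 : ℝ) • K, -((ρ + 1)/ρ) • S; (1 + ρ) • N, -(2 : ℝ) • K'])
    (hR₀ : R₀ = (1/(ρ + 1)) • !![(1 : A), (2 : ℝ) • S; -(2*ρ) • N, ρ • (1 : A)])
    (hR₀t : R₀t = (1/(ρ + 1)) • !![ρ • (1 : A), -(2 : ℝ) • S; (2*ρ) • N, (1 : A)])
    (hGFK₀ : GFK₀ = L₀ + R₀ * CFK₀)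
    (hGFK₀t : GFK₀t = L₀t + CFK₀t * R₀t) :
    GFK₀t * GFK₀ =
      !![(4*(ρ - 1)^2/(ρ + 1)^2) •
           ((K + β • (1 : A)) * (K ^ 3 - (3*β) • K ^ 2 + β • (1 : A))), 0;
         0, (4*(ρ - 1)^2/(ρ + 1)^2) •
           ((K' + β • (1 : A)) * (K' ^ 3 - (3*β) • K' ^ 2 + β • (1 : A)))] := by
  subst hGFK₀ hGFK₀t hL₀ hL₀t hCFK₀ hCFK₀t hR₀ hR₀t
  have hβ' : 2 * (ρ - 1) * β = ρ + 1 := by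
    rw [hβ]
    field_simp [sub_ne_zero.mpr hρ1]
  exact Calderon.GFK₀t_mul_GFK₀ hSN hNS hNK hKS hρ.ne' (by positivity) hβ'
end

section
/- Take ρ = 1 and define the 2×2 matrices over A: L₀ = [[(1/2)·1 + K, −S], [N, (1/2)·1 − K']], L₀ᵗ = [[(1/2)·1 − K, S], [−N, (1/2)·1 + K']], CFK₀ = [[−2K, 2S], [−2N, 2K']], CFK₀ᵗ = [[2K, −2S], [2N, −2K']], R₀ = (1/2)·[[1, 2S], [−2N, 1]], R₀ᵗ = (1/2)·[[1, −2S], [2N, 1]], GFK₀ = L₀ + R₀·CFK₀ and GFK₀ᵗ = L₀ᵗ + CFK₀ᵗ·R₀ᵗ. Then GFK₀ᵗ · GFK₀ = diag(1 − 3K², 1 − 3K'²). -/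
/-! The Calderón identities collapse `GFK₀` to `[[1 - 2K², 2SK'], [2NK, 1 - 2K'²]]` and
`GFK₀ᵗ` to `[[1 - 2K², -2KS], [-2K'N, 1 - 2K'²]]`. In their product the diagonal entries
reduce by `SN` and `NS` once more, while the off-diagonal entries cancel because `KS = SK'`
(resp. `K'N = NK`) lets `S` (resp. `N`) intertwine polynomials in `K` with the same
polynomials in `K'`. -/

section Calderon

variable {A : Type*} [Ring A] [Algebra ℝ A] {S N K K' : A}

theorem L0_add_R0_mul_CFK0 (hSN : S * N = -(1/4 : ℝ) • (1 : A) + K ^ 2)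
    (hNS : N * S = -(1/4 : ℝ) • (1 : A) + K' ^ 2) :
    !![(1/2 : ℝ) • (1 : A) + K, -S; N, (1/2 : ℝ) • (1 : A) - K'] +
      (1/2 : ℝ) • !![(1 : A), (2 : ℝ) • S; -(2 : ℝ) • N, (1 : A)] *
        !![-(2 : ℝ) • K, (2 : ℝ) • S; -(2 : ℝ) • N, (2 : ℝ) • K'] =
      !![1 - (2 : ℝ) • K ^ 2, (2 : ℝ) • (S * K');
        (2 : ℝ) • (N * K), 1 - (2 : ℝ) • K' ^ 2] := by
  simp only [Matrix.smul_of, Matrix.smul_cons, Matrix.smul_empty, Matrix.mul_fin_two,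
    Matrix.of_add_of, Matrix.cons_add_cons, Matrix.empty_add_empty]
  congr 1
  refine Matrix.vec2_eq (Matrix.vec2_eq ?_ ?_) (Matrix.vec2_eq ?_ ?_) <;>
    simp only [smul_mul_assoc, mul_smul_comm, smul_smul, neg_smul, neg_mul, mul_neg, one_mul,
      hSN, hNS] <;> module

theorem L0t_add_CFK0t_mul_R0t (hSN : S * N = -(1/4 : ℝ) • (1 : A) + K ^ 2)
    (hNS : N * S = -(1/4 : ℝ) • (1 : A) + K' ^ 2) :
    !![(1/2 : ℝ) • (1 : A) - K, S; -N, (1/2 : ℝ) • (1 : A) + K'] +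
      !![(2 : ℝ) • K, -(2 : ℝ) • S; (2 : ℝ) • N, -(2 : ℝ) • K'] *
        (1/2 : ℝ) • !![(1 : A), -(2 : ℝ) • S; (2 : ℝ) • N, (1 : A)] =
      !![1 - (2 : ℝ) • K ^ 2, -(2 : ℝ) • (K * S);
        -(2 : ℝ) • (K' * N), 1 - (2 : ℝ) • K' ^ 2] := by
  simp only [Matrix.smul_of, Matrix.smul_cons, Matrix.smul_empty, Matrix.mul_fin_two,
    Matrix.of_add_of, Matrix.cons_add_cons, Matrix.empty_add_empty]
  congr 1
  refine Matrix.vec2_eq (Matrix.vec2_eq ?_ ?_) (Matrix.vec2_eq ?_ ?_) <;>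
    simp only [smul_mul_assoc, mul_smul_comm, smul_smul, neg_smul, neg_mul, mul_neg, mul_one,
      hSN, hNS] <;> module

theorem GFK0t_mul_GFK0_diag_entry
    (h : S * N = -(1/4 : ℝ) • (1 : A) + K ^ 2) :
    (1 - (2 : ℝ) • K ^ 2) * (1 - (2 : ℝ) • K ^ 2) + -(2 : ℝ) • (K * S) * ((2 : ℝ) • (N * K)) =
      1 - (3 : ℝ) • K ^ 2 := by
  have hKSNK : K * S * (N * K) = -(1/4 : ℝ) • K ^ 2 + K ^ 2 * K ^ 2 := by
    rw [mul_assoc, ← mul_assoc S, h]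
    noncomm_ring
  simp only [sub_mul, mul_sub, one_mul, mul_one, smul_mul_assoc, mul_smul_comm, neg_smul, neg_mul,
    hKSNK]
  module

theorem GFK0t_mul_GFK0_offDiag_entry (h : K * S = S * K') :
    (1 - (2 : ℝ) • K ^ 2) * ((2 : ℝ) • (S * K')) +
      -(2 : ℝ) • (K * S) * (1 - (2 : ℝ) • K' ^ 2) = 0 := by
  have hSq : K ^ 2 * S = S * K' ^ 2 := (SemiconjBy.pow_right (a := S) h.symm 2).symm
  have hSqK' : K ^ 2 * (S * K') = S * K' * K' ^ 2 := by
    rw [← mul_assoc, hSq, mul_assoc, mul_assoc, pow_mul_comm']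
  simp only [sub_mul, mul_sub, one_mul, mul_one, smul_mul_assoc, mul_smul_comm, neg_smul, neg_mul,
    h, hSqK']
  module

end Calderon

theorem GFK0t_mul_GFK0_rho_one (A : Type*) [Ring A] [Algebra ℝ A]
    (S N K K' : A)
    (hSN : S * N = -(1/4 : ℝ) • (1 : A) + K ^ 2)
    (hNS : N * S = -(1/4 : ℝ) • (1 : A) + K' ^ 2)
    (hNK : N * K = K' * N)
    (hKS : K * S = S * K')
    (L₀ L₀t CFK₀ CFK₀t R₀ R₀t GFK₀ GFK₀t : Matrix (Fin 2) (Fin 2) A)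
    (hL₀ : L₀ = !![(1/2 : ℝ) • (1 : A) + K, -S; N, (1/2 : ℝ) • (1 : A) - K'])
    (hL₀t : L₀t = !![(1/2 : ℝ) • (1 : A) - K, S; -N, (1/2 : ℝ) • (1 : A) + K'])
    (hCFK₀ : CFK₀ = !![-(2 : ℝ) • K, (2 : ℝ) • S; -(2 : ℝ) • N, (2 : ℝ) • K'])
    (hCFK₀t : CFK₀t = !![(2 : ℝ) • K, -(2 : ℝ) • S; (2 : ℝ) • N, -(2 : ℝ) • K'])
    (hR₀ : R₀ = (1/2 : ℝ) • !![(1 : A), (2 : ℝ) • S; -(2 : ℝ) • N, (1 : A)])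
    (hR₀t : R₀t = (1/2 : ℝ) • !![(1 : A), -(2 : ℝ) • S; (2 : ℝ) • N, (1 : A)])
    (hGFK₀ : GFK₀ = L₀ + R₀ * CFK₀)
    (hGFK₀t : GFK₀t = L₀t + CFK₀t * R₀t) :
    GFK₀t * GFK₀ =
      !![(1 : A) - (3 : ℝ) • K ^ 2, 0; 0, (1 : A) - (3 : ℝ) • K' ^ 2] := by
  subst hGFK₀ hGFK₀t hL₀ hL₀t hCFK₀ hCFK₀t hR₀ hR₀t
  rw [L0_add_R0_mul_CFK0 hSN hNS, L0t_add_CFK0t_mul_R0t hSN hNS, Matrix.mul_fin_two,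
    add_comm (-(2 : ℝ) • (K' * N) * (1 - _)), add_comm (-(2 : ℝ) • (K' * N) * _),
    GFK0t_mul_GFK0_diag_entry hSN, GFK0t_mul_GFK0_diag_entry hNS,
    GFK0t_mul_GFK0_offDiag_entry hKS,
    GFK0t_mul_GFK0_offDiag_entry hNK.symm]
end

section
/- Let x : ℝ → ℝ² be twice continuously differentiable in a neighborhood of t₀, with components x = (x₁, x₂), and assume x'(t₀) ≠ 0. Then, as τ tends to t₀ with τ ≠ t₀, the quotient (x₂'(τ)·(x₁(t₀) − x₁(τ)) − x₁'(τ)·(x₂(t₀) − x₂(τ))) / ‖x(t₀) − x(τ)‖² tends to the limit (x₂'(t₀)·x₁''(t₀) − x₁'(t₀)·x₂''(t₀)) / (2‖x'(t₀)‖²). -/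
/-!
Divide numerator and denominator by `(t₀ - τ)²`. The denominator becomes a sum of squared
difference quotients, with limit `|x'(t₀)|²`. The numerator `N(τ) = ν(τ) · (x(t₀) - x(τ))`
vanishes at `τ = t₀` together with its derivative, because the terms `x₂' x₁'` cancel in
`N'(τ) = ν'(τ) · (x(t₀) - x(τ))`; so L'Hôpital's rule against `(t₀ - τ)²` gives the limit
`ν(t₀) · x''(t₀) / 2`.
-/

open Filter Topology

theorem ContDiffAt.eventually_hasDerivAt_deriv {𝕜 F : Type*} [NontriviallyNormedField 𝕜]
    [NormedAddCommGroup F] [NormedSpace 𝕜 F] {f : 𝕜 → F} {x : 𝕜} {n : WithTop ℕ∞}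
    (hf : ContDiffAt 𝕜 n f x) (hn : 1 ≤ n) :
    ∀ᶠ y in 𝓝 x, HasDerivAt f (deriv f y) y :=
  ((hf.of_le hn).eventually (by simp)).mono fun _ hy =>
    (hy.differentiableAt one_ne_zero).hasDerivAt

theorem tendsto_sub_div_sub_nhdsNE {f : ℝ → ℝ} {f' t₀ : ℝ} (hf : HasDerivAt f f' t₀) :
    Tendsto (fun τ => (f t₀ - f τ) / (t₀ - τ)) (𝓝[≠] t₀) (𝓝 f') :=
  (hasDerivAt_iff_tendsto_slope.mp hf).congr fun τ => by rw [slope_comm, slope_def_field]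

theorem tendsto_chord_sq_div_sq_nhdsNE {f g : ℝ → ℝ} {f' g' t₀ : ℝ}
    (hf : HasDerivAt f f' t₀) (hg : HasDerivAt g g' t₀) :
    Tendsto (fun τ => ((f t₀ - f τ) ^ 2 + (g t₀ - g τ) ^ 2) / (t₀ - τ) ^ 2) (𝓝[≠] t₀)
      (𝓝 (f' ^ 2 + g' ^ 2)) :=
  (((tendsto_sub_div_sub_nhdsNE hf).pow 2).add ((tendsto_sub_div_sub_nhdsNE hg).pow 2)).congr
    fun τ => by rw [add_div, div_pow, div_pow]

section NormalDotChord

variable {f g f' g' f'' g'' : ℝ → ℝ} {t₀ : ℝ}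

theorem hasDerivAt_normal_dot_chord {τ : ℝ} (hf : HasDerivAt f (f' τ) τ)
    (hg : HasDerivAt g (g' τ) τ) (hf' : HasDerivAt f' (f'' τ) τ) (hg' : HasDerivAt g' (g'' τ) τ) :
    HasDerivAt (fun τ => g' τ * (f t₀ - f τ) - f' τ * (g t₀ - g τ))
      (g'' τ * (f t₀ - f τ) - f'' τ * (g t₀ - g τ)) τ := by
  refine ((hg'.mul (hf.const_sub (f t₀))).sub (hf'.mul (hg.const_sub (g t₀)))).congr_deriv ?_
  ring

theorem tendsto_normal_dot_chord_div_sq_nhdsNE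
    (hf : ∀ᶠ τ in 𝓝 t₀, HasDerivAt f (f' τ) τ) (hg : ∀ᶠ τ in 𝓝 t₀, HasDerivAt g (g' τ) τ)
    (hf' : ∀ᶠ τ in 𝓝 t₀, HasDerivAt f' (f'' τ) τ) (hg' : ∀ᶠ τ in 𝓝 t₀, HasDerivAt g' (g'' τ) τ)
    (hf'' : ContinuousAt f'' t₀) (hg'' : ContinuousAt g'' t₀) :
    Tendsto (fun τ => (g' τ * (f t₀ - f τ) - f' τ * (g t₀ - g τ)) / (t₀ - τ) ^ 2) (𝓝[≠] t₀)
      (𝓝 ((g' t₀ * f'' t₀ - f' t₀ * g'' t₀) / 2)) := by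
  have hne : ∀ᶠ τ in 𝓝[≠] t₀, t₀ - τ ≠ 0 :=
    eventually_nhdsWithin_of_forall fun τ hτ => sub_ne_zero.mpr (Ne.symm hτ)
  have hN_cont : ContinuousAt (fun τ => g' τ * (f t₀ - f τ) - f' τ * (g t₀ - g τ)) t₀ :=
    (hg'.self_of_nhds.continuousAt.mul (continuousAt_const.sub hf.self_of_nhds.continuousAt)).sub
      (hf'.self_of_nhds.continuousAt.mul (continuousAt_const.sub hg.self_of_nhds.continuousAt))
  have hquot : Tendsto (fun τ => (g'' τ * (f t₀ - f τ) - f'' τ * (g t₀ - g τ)) / -(2 * (t₀ - τ)))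
      (𝓝[≠] t₀) (𝓝 ((g' t₀ * f'' t₀ - f' t₀ * g'' t₀) / 2)) := by
    have h := (((hg''.tendsto.mono_left nhdsWithin_le_nhds).mul
      (tendsto_sub_div_sub_nhdsNE hf.self_of_nhds)).sub ((hf''.tendsto.mono_left
        nhdsWithin_le_nhds).mul (tendsto_sub_div_sub_nhdsNE hg.self_of_nhds))).div_const (-2)
    rw [show (g' t₀ * f'' t₀ - f' t₀ * g'' t₀) / 2
      = (g'' t₀ * f' t₀ - f'' t₀ * g' t₀) / -2 by ring]
    refine h.congr' (hne.mono fun τ hτ => ?_)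
    field_simp
  refine HasDerivAt.lhopital_zero_nhdsNE ?_ ?_ ?_ ?_ ?_ hquot
  · filter_upwards [nhdsWithin_le_nhds (hf.and (hg.and (hf'.and hg')))] with τ ⟨h₁, h₂, h₃, h₄⟩
    exact hasDerivAt_normal_dot_chord h₁ h₂ h₃ h₄
  · refine Eventually.of_forall fun τ => ?_
    refine (((hasDerivAt_id τ).const_sub t₀).pow 2).congr_deriv ?_
    simp only [id]
    ring
  · exact hne.mono fun τ hτ => by simpa using hτ
  · simpa using hN_cont.tendsto.mono_left nhdsWithin_le_nhds
  · have h : Continuous fun τ : ℝ => (t₀ - τ) ^ 2 := by fun_prop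
    simpa using h.tendsto t₀ |>.mono_left nhdsWithin_le_nhds

end NormalDotChord

theorem double_layer_kernel_diagonal_limit
    (x₁ x₂ : ℝ → ℝ) (t₀ : ℝ)
    (hx : ∃ u ∈ 𝓝 t₀, ContDiffOn ℝ 2 x₁ u ∧ ContDiffOn ℝ 2 x₂ u)
    (hx' : (deriv x₁ t₀, deriv x₂ t₀) ≠ (0, 0)) :
    Tendsto
      (fun τ : ℝ =>
        (deriv x₂ τ * (x₁ t₀ - x₁ τ) - deriv x₁ τ * (x₂ t₀ - x₂ τ)) /
          ((x₁ t₀ - x₁ τ)^2 + (x₂ t₀ - x₂ τ)^2))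
      (𝓝[≠] t₀)
      (𝓝 ((deriv x₂ t₀ * deriv (deriv x₁) t₀ - deriv x₁ t₀ * deriv (deriv x₂) t₀) /
        (2 * ((deriv x₁ t₀)^2 + (deriv x₂ t₀)^2)))) := by
  obtain ⟨u, hu, h₁, h₂⟩ := hx
  have c₁ : ContDiffAt ℝ 2 x₁ t₀ := h₁.contDiffAt hu
  have c₂ : ContDiffAt ℝ 2 x₂ t₀ := h₂.contDiffAt hu
  have c₁' : ContDiffAt ℝ 1 (deriv x₁) t₀ := c₁.derivWithin le_rfl
  have c₂' : ContDiffAt ℝ 1 (deriv x₂) t₀ := c₂.derivWithin le_rfl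
  have hnum := tendsto_normal_dot_chord_div_sq_nhdsNE
    (c₁.eventually_hasDerivAt_deriv one_le_two) (c₂.eventually_hasDerivAt_deriv one_le_two)
    (c₁'.eventually_hasDerivAt_deriv le_rfl) (c₂'.eventually_hasDerivAt_deriv le_rfl)
    (c₁'.derivWithin (m := 0) le_rfl).continuousAt (c₂'.derivWithin (m := 0) le_rfl).continuousAt
  have hden := tendsto_chord_sq_div_sq_nhdsNE
    (c₁.eventually_hasDerivAt_deriv one_le_two).self_of_nhds
    (c₂.eventually_hasDerivAt_deriv one_le_two).self_of_nhds
  have hspeed : deriv x₁ t₀ ^ 2 + deriv x₂ t₀ ^ 2 ≠ 0 := by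
    contrapose! hx'
    ext <;> nlinarith [sq_nonneg (deriv x₁ t₀), sq_nonneg (deriv x₂ t₀)]
  rw [← div_div]
  refine (hnum.div hden hspeed).congr' (eventually_nhdsWithin_of_forall fun τ hτ => ?_)
  exact div_div_div_cancel_right₀ (pow_ne_zero 2 (sub_ne_zero.mpr (Ne.symm hτ))) _ _
end
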